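/- Cross-term orthogonality for the optimal PPI coefficient: let ∇m(Z) ∈ ℝ^p be square-integrable, ∇m^f(X) ∈ ℝ^p square-integrable with nonsingular covariance, γ ∈ (0,1), and set A* = γ·Cov[∇m(Z), ∇m^f(X)]·Var[∇m^f(X)]^{-1}. Then for every A ∈ ℝ^{p×p}, in the Hilbert space with inner product ⟨(u₁,v₁),(u₂,v₂)⟩ = E[u₁u₂ᵀ] + ((1−γ)/γ)E[v₁v₂ᵀ] applied to pairs (∇m(Z) − A∇m^f(X)-centered, A∇m^f(X)-centered), the cross term ⟨ φ_A − φ_{A*}, φ_{A*}ᵀ ⟩ = 0, where φ_A denotes the pair (−(∇m(Z) − A ∇m^f(X) − E[·]), −A(∇m^f(X) − E[·])). Consequently ⟨φ_A, φ_Aᵀ⟩ ⪰ ⟨φ_{A*}, φ_{A*}ᵀ⟩ for all A. -/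

import Mathlib

/-!
The optimal coefficient solves the normal equation `Var[v] A*ᵀ = γ Cov[v, u]`. Since
`φ_A − φ_{A*} = ((A − A*) v, −(A − A*) v)`, its `H`-inner product with `φ_{A*}` equals
`(A − A*) (−Cov[v, u − A* v] + ((1 − γ)/γ) Var[v] A*ᵀ)`, which the normal equation makes vanish.
The inequality is then Pythagoras: writing `φ_A = φ_{A*} + ψ`, the two cross terms vanish and
`⟨φ_A, φ_A⟩_H − ⟨φ_{A*}, φ_{A*}⟩_H = ⟨ψ, ψ⟩_H`, a sum of second-moment matrices with nonnegative
weights.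
-/

open MeasureTheory

/-- Covariance matrix of two vector-valued random variables. -/
noncomputable def covMatrix {Ω : Type*} [MeasurableSpace Ω] (μ : Measure Ω) {p q : ℕ}
    (f : Ω → Fin p → ℝ) (g : Ω → Fin q → ℝ) : Matrix (Fin p) (Fin q) ℝ :=
  Matrix.of fun i j => ∫ ω, (f ω i - ∫ ω', f ω' i ∂μ) * (g ω j - ∫ ω', g ω' j ∂μ) ∂μ

open Matrix

section

variable {Ω : Type*} [MeasurableSpace Ω] {μ : Measure Ω} {l m n : Type*}

lemma MeasureTheory.MemLp.mulVec [Fintype l] [Fintype m] {p : ENNReal} {f : Ω → m → ℝ}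
    (hf : MemLp f p μ) (M : Matrix l m ℝ) : MemLp (fun ω => M *ᵥ f ω) p μ :=
  (LinearMap.toContinuousLinearMap (mulVecLin M)).comp_memLp' hf

lemma integrable_mul_apply [Fintype m] [Fintype n] {f : Ω → m → ℝ} {g : Ω → n → ℝ}
    (hf : MemLp f 2 μ) (hg : MemLp g 2 μ) (i : m) (j : n) :
    Integrable (fun ω => f ω i * g ω j) μ :=
  (hf.eval i).integrable_mul (hg.eval j)

section crossMoment

noncomputable def crossMoment (μ : Measure Ω) (f : Ω → m → ℝ) (g : Ω → n → ℝ) : Matrix m n ℝ :=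
  Matrix.of fun i j => ∫ ω, f ω i * g ω j ∂μ

lemma crossMoment_transpose (f : Ω → m → ℝ) (g : Ω → n → ℝ) :
    (crossMoment μ f g)ᵀ = crossMoment μ g f := by
  ext i j
  simp only [crossMoment, transpose_apply, of_apply, mul_comm]

lemma crossMoment_neg_left (f : Ω → m → ℝ) (g : Ω → n → ℝ) :
    crossMoment μ (fun ω => -f ω) g = -crossMoment μ f g := by
  ext i j
  simp only [crossMoment, of_apply, Matrix.neg_apply, Pi.neg_apply, neg_mul, integral_neg]

lemma crossMoment_neg_right (f : Ω → m → ℝ) (g : Ω → n → ℝ) :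
    crossMoment μ f (fun ω => -g ω) = -crossMoment μ f g := by
  rw [← crossMoment_transpose, crossMoment_neg_left, transpose_neg, crossMoment_transpose]

variable [Fintype m] [Fintype n]

lemma crossMoment_add_left {f f' : Ω → m → ℝ} {g : Ω → n → ℝ} (hf : MemLp f 2 μ)
    (hf' : MemLp f' 2 μ) (hg : MemLp g 2 μ) :
    crossMoment μ (f + f') g = crossMoment μ f g + crossMoment μ f' g := by
  ext i j
  simp only [crossMoment, of_apply, Matrix.add_apply, Pi.add_apply, add_mul]
  exact integral_add (integrable_mul_apply hf hg i j) (integrable_mul_apply hf' hg i j)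

lemma crossMoment_add_right {f : Ω → m → ℝ} {g g' : Ω → n → ℝ} (hf : MemLp f 2 μ)
    (hg : MemLp g 2 μ) (hg' : MemLp g' 2 μ) :
    crossMoment μ f (g + g') = crossMoment μ f g + crossMoment μ f g' := by
  rw [← crossMoment_transpose, crossMoment_add_left hg hg' hf, transpose_add,
    crossMoment_transpose, crossMoment_transpose]

lemma crossMoment_sub_right {f : Ω → m → ℝ} {g g' : Ω → n → ℝ} (hf : MemLp f 2 μ)
    (hg : MemLp g 2 μ) (hg' : MemLp g' 2 μ) :
    crossMoment μ f (fun ω => g ω - g' ω) = crossMoment μ f g - crossMoment μ f g' := by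
  rw [sub_eq_add_neg (crossMoment μ f g), ← crossMoment_neg_right]
  exact crossMoment_add_right hf hg hg'.neg

lemma crossMoment_mulVec_left [Fintype l] {f : Ω → m → ℝ} {g : Ω → n → ℝ} (hf : MemLp f 2 μ)
    (hg : MemLp g 2 μ) (M : Matrix l m ℝ) :
    crossMoment μ (fun ω => M *ᵥ f ω) g = M * crossMoment μ f g := by
  ext i j
  simp only [crossMoment, of_apply, mul_apply, mulVec, dotProduct, Finset.sum_mul, mul_assoc]
  rw [integral_finsetSum _ fun k _ => (integrable_mul_apply hf hg k j).const_mul (M i k)]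
  simp only [integral_const_mul]

lemma crossMoment_mulVec_right [Fintype l] {f : Ω → m → ℝ} {g : Ω → n → ℝ} (hf : MemLp f 2 μ)
    (hg : MemLp g 2 μ) (M : Matrix l n ℝ) :
    crossMoment μ f (fun ω => M *ᵥ g ω) = crossMoment μ f g * Mᵀ := by
  rw [← crossMoment_transpose, crossMoment_mulVec_left hg hf, transpose_mul,
    crossMoment_transpose]

lemma crossMoment_self_posSemidef {f : Ω → m → ℝ} (hf : MemLp f 2 μ) :
    (crossMoment μ f f).PosSemidef := by
  refine .of_dotProduct_mulVec_nonneg (crossMoment_transpose f f) fun x => ?_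
  set R := replicateRow Unit x
  have hquad : star x ⬝ᵥ (crossMoment μ f f *ᵥ x)
      = crossMoment μ (fun ω => R *ᵥ f ω) (fun ω => R *ᵥ f ω) () () := by
    rw [crossMoment_mulVec_left hf (hf.mulVec R), crossMoment_mulVec_right hf hf,
      ← Matrix.mul_assoc, transpose_replicateRow, ← replicateRow_vecMul,
      replicateRow_mul_replicateCol_apply, star_trivial, dotProduct_mulVec]
  rw [hquad]
  exact integral_nonneg fun ω => mul_self_nonneg _

end crossMoment

section pairGram

/-- The matrix-valued inner product `⟨(a₁, b₁), (a₂, b₂)⟩_H` of the paper, with `c = (1 − γ)/γ`. -/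
noncomputable def pairGram (μ : Measure Ω) (c : ℝ) (a₁ b₁ : Ω → m → ℝ) (a₂ b₂ : Ω → n → ℝ) :
    Matrix m n ℝ :=
  crossMoment μ a₁ a₂ + c • crossMoment μ b₁ b₂

variable {c : ℝ} {a₁ b₁ a₁' b₁' : Ω → m → ℝ} {a₂ b₂ a₂' b₂' : Ω → n → ℝ}

lemma pairGram_transpose : (pairGram μ c a₁ b₁ a₂ b₂)ᵀ = pairGram μ c a₂ b₂ a₁ b₁ := by
  simp only [pairGram, transpose_add, transpose_smul, crossMoment_transpose]

variable [Fintype m] [Fintype n]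

lemma pairGram_add_left (ha₁ : MemLp a₁ 2 μ) (hb₁ : MemLp b₁ 2 μ) (ha₁' : MemLp a₁' 2 μ)
    (hb₁' : MemLp b₁' 2 μ) (ha₂ : MemLp a₂ 2 μ) (hb₂ : MemLp b₂ 2 μ) :
    pairGram μ c (a₁ + a₁') (b₁ + b₁') a₂ b₂
      = pairGram μ c a₁ b₁ a₂ b₂ + pairGram μ c a₁' b₁' a₂ b₂ := by
  simp only [pairGram]
  rw [crossMoment_add_left ha₁ ha₁' ha₂, crossMoment_add_left hb₁ hb₁' hb₂]
  module

lemma pairGram_add_right (ha₁ : MemLp a₁ 2 μ) (hb₁ : MemLp b₁ 2 μ) (ha₂ : MemLp a₂ 2 μ)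
    (hb₂ : MemLp b₂ 2 μ) (ha₂' : MemLp a₂' 2 μ) (hb₂' : MemLp b₂' 2 μ) :
    pairGram μ c a₁ b₁ (a₂ + a₂') (b₂ + b₂')
      = pairGram μ c a₁ b₁ a₂ b₂ + pairGram μ c a₁ b₁ a₂' b₂' := by
  rw [← pairGram_transpose, pairGram_add_left ha₂ hb₂ ha₂' hb₂' ha₁ hb₁, transpose_add,
    pairGram_transpose, pairGram_transpose]

lemma pairGram_self_posSemidef (hc : 0 ≤ c) (ha₁ : MemLp a₁ 2 μ) (hb₁ : MemLp b₁ 2 μ) :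
    (pairGram μ c a₁ b₁ a₁ b₁).PosSemidef :=
  (crossMoment_self_posSemidef ha₁).add ((crossMoment_self_posSemidef hb₁).smul hc)

lemma pairGram_add_self_sub_self (ha₁ : MemLp a₁ 2 μ) (hb₁ : MemLp b₁ 2 μ)
    (ha₁' : MemLp a₁' 2 μ) (hb₁' : MemLp b₁' 2 μ) (hcross : pairGram μ c a₁' b₁' a₁ b₁ = 0) :
    pairGram μ c (a₁ + a₁') (b₁ + b₁') (a₁ + a₁') (b₁ + b₁') - pairGram μ c a₁ b₁ a₁ b₁
      = pairGram μ c a₁' b₁' a₁' b₁' := by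
  have hcross' : pairGram μ c a₁ b₁ a₁' b₁' = 0 := by
    rw [← pairGram_transpose, hcross, transpose_zero]
  rw [pairGram_add_left ha₁ hb₁ ha₁' hb₁' (ha₁.add ha₁') (hb₁.add hb₁'),
    pairGram_add_right ha₁ hb₁ ha₁ hb₁ ha₁' hb₁', pairGram_add_right ha₁' hb₁' ha₁ hb₁ ha₁' hb₁',
    hcross, hcross']
  abel

end pairGram

section optimalCoeff

variable [Fintype m] [DecidableEq m]

noncomputable def optimalCoeff (μ : Measure Ω) (γ : ℝ) (x : Ω → n → ℝ) (y : Ω → m → ℝ) :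
    Matrix n m ℝ :=
  γ • (crossMoment μ x y * (crossMoment μ y y)⁻¹)

lemma crossMoment_mul_transpose_optimalCoeff (γ : ℝ) (x : Ω → n → ℝ) {y : Ω → m → ℝ}
    (hdet : IsUnit (crossMoment μ y y).det) :
    crossMoment μ y y * (optimalCoeff μ γ x y)ᵀ = γ • crossMoment μ y x := by
  rw [optimalCoeff, transpose_smul, transpose_mul, transpose_nonsing_inv, crossMoment_transpose,
    crossMoment_transpose, Matrix.mul_smul, ← Matrix.mul_assoc, mul_nonsing_inv _ hdet,
    Matrix.one_mul]

variable [Fintype n] {γ : ℝ} {x : Ω → n → ℝ} {y : Ω → m → ℝ}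

lemma crossMoment_sub_optimalCoeff (hγ : γ ≠ 0) (hx : MemLp x 2 μ) (hy : MemLp y 2 μ)
    (hdet : IsUnit (crossMoment μ y y).det) :
    crossMoment μ y (fun ω => x ω - optimalCoeff μ γ x y *ᵥ y ω)
      = ((1 - γ) / γ) • crossMoment μ y (fun ω => optimalCoeff μ γ x y *ᵥ y ω) := by
  rw [crossMoment_sub_right hy hx (hy.mulVec _), crossMoment_mulVec_right hy hy,
    crossMoment_mul_transpose_optimalCoeff γ x hdet, smul_smul, div_mul_cancel₀ _ hγ, sub_smul,
    one_smul]

lemma pairGram_residual_optimalCoeff [Fintype l] (hγ : γ ≠ 0) (hx : MemLp x 2 μ)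
    (hy : MemLp y 2 μ) (hdet : IsUnit (crossMoment μ y y).det) (D : Matrix l m ℝ) :
    pairGram μ ((1 - γ) / γ) (fun ω => D *ᵥ y ω) (fun ω => -(D *ᵥ y ω))
      (fun ω => -(x ω - optimalCoeff μ γ x y *ᵥ y ω))
      (fun ω => -(optimalCoeff μ γ x y *ᵥ y ω)) = 0 := by
  have hres : MemLp (fun ω => x ω - optimalCoeff μ γ x y *ᵥ y ω) 2 μ := hx.sub (hy.mulVec _)
  rw [pairGram, crossMoment_neg_right, crossMoment_neg_left, crossMoment_neg_right,
    crossMoment_mulVec_left hy hres, crossMoment_mulVec_left hy (hy.mulVec _),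
    crossMoment_sub_optimalCoeff hγ hx hy hdet, Matrix.mul_smul]
  module

end optimalCoeff

end

/-- Cross-term orthogonality for the optimal PPI coefficient
`A* = γ Cov[∇m, ∇m^f] Var[∇m^f]⁻¹`: for every `A`, the `H`-cross term
`⟨φ_A − φ_{A*}, φ_{A*}ᵀ⟩_H` vanishes, hence `⟨φ_A, φ_Aᵀ⟩_H ⪰ ⟨φ_{A*}, φ_{A*}ᵀ⟩_H`. -/
theorem stmt_10 {Ω : Type*} [MeasurableSpace Ω]
    (μ : Measure Ω) [IsProbabilityMeasure μ]
    (γ : ℝ) (hγ0 : 0 < γ) (hγ1 : γ < 1) {p : ℕ}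
    (u v : Ω → Fin p → ℝ)
    (hu : ∀ i, MemLp (fun ω => u ω i) 2 μ)
    (hv : ∀ i, MemLp (fun ω => v ω i) 2 μ)
    (hnonsing : IsUnit (covMatrix μ v v).det)
    (u0 v0 : Ω → Fin p → ℝ)
    (hu0 : u0 = fun ω => u ω - fun i => ∫ ω', u ω' i ∂μ)
    (hv0 : v0 = fun ω => v ω - fun i => ∫ ω', v ω' i ∂μ)
    (Astar : Matrix (Fin p) (Fin p) ℝ)
    (hAstar : Astar = γ • (covMatrix μ u v * (covMatrix μ v v)⁻¹))
    (a b : Matrix (Fin p) (Fin p) ℝ → Ω → Fin p → ℝ)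
    (ha : a = fun A ω => -(u0 ω - A.mulVec (v0 ω)))
    (hb : b = fun A ω => -(A.mulVec (v0 ω)))
    (Hp : (Ω → Fin p → ℝ) → (Ω → Fin p → ℝ) → (Ω → Fin p → ℝ) → (Ω → Fin p → ℝ) →
      Matrix (Fin p) (Fin p) ℝ)
    (hHp : Hp = fun a₁ b₁ a₂ b₂ => Matrix.of fun i j =>
      (∫ ω, a₁ ω i * a₂ ω j ∂μ) + ((1 - γ) / γ) * ∫ ω, b₁ ω i * b₂ ω j ∂μ) :
    ∀ A : Matrix (Fin p) (Fin p) ℝ,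
      Hp (fun ω => a A ω - a Astar ω) (fun ω => b A ω - b Astar ω) (a Astar) (b Astar) = 0 ∧
      (Hp (a A) (b A) (a A) (b A) - Hp (a Astar) (b Astar) (a Astar) (b Astar)).PosSemidef := by
  intro A
  have hu0L : MemLp u0 2 μ := by rw [hu0]; exact (memLp_pi_iff.2 hu).sub (memLp_const _)
  have hv0L : MemLp v0 2 μ := by rw [hv0]; exact (memLp_pi_iff.2 hv).sub (memLp_const _)
  have haL (A) : MemLp (a A) 2 μ := by rw [ha]; exact (hu0L.sub (hv0L.mulVec A)).neg
  have hbL (A) : MemLp (b A) 2 μ := by rw [hb]; exact (hv0L.mulVec A).neg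
  -- `covMatrix` is definitionally the `crossMoment` of the centred variables.
  have hdet : IsUnit (crossMoment μ v0 v0).det := by subst hv0; exact hnonsing
  have hAstar' : Astar = optimalCoeff μ γ u0 v0 := by subst hu0 hv0; exact hAstar
  obtain rfl : Hp = pairGram μ ((1 - γ) / γ) := hHp
  have hcross :
      pairGram μ ((1 - γ) / γ) (a A - a Astar) (b A - b Astar) (a Astar) (b Astar) = 0 := by
    have hψa : a A - a Astar = fun ω => (A - Astar) *ᵥ v0 ω := by
      funext ω; simp only [ha, Pi.sub_apply, sub_mulVec]; abel
    have hψb : b A - b Astar = fun ω => -((A - Astar) *ᵥ v0 ω) := by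
      funext ω; simp only [hb, Pi.sub_apply, sub_mulVec]; abel
    rw [hψa, hψb, ha, hb, hAstar']
    exact pairGram_residual_optimalCoeff hγ0.ne' hu0L hv0L hdet _
  refine ⟨hcross, ?_⟩
  have hψaL := (haL A).sub (haL Astar)
  have hψbL := (hbL A).sub (hbL Astar)
  have hpyth := pairGram_add_self_sub_self (haL Astar) (hbL Astar) hψaL hψbL hcross
  rw [add_sub_cancel, add_sub_cancel] at hpyth
  rw [hpyth]
  exact pairGram_self_posSemidef (div_nonneg (sub_nonneg.2 hγ1.le) hγ0.le) hψaL hψbL
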